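/- Let m > 0. The function φ(τ) = 2τ(m−τ)² · [τ(−m²+2m+3) + m²+6m+6] / (m²(m²+6m+6)(1+τ)) is non-negative on [0, m], vanishes at τ = 0 and τ = m, and satisfies φ(τ) > 0 for τ ∈ (0, m), if and only if m ≤ k₂, where k₂ is the unique positive real root of m³ − 3m² − 9m − 6. Moreover φ′(0) = 2 and φ′(m) = 0. -/

import Mathlib

/-! The numerator of `φ` is `2τ(m − τ)²` times the affine factor
`L(τ) = τ(−m² + 2m + 3) + m² + 6m + 6` and the denominator is positive, so on `(0, m)` the sign
of `φ` is that of `L`. Since `L(0) = m² + 6m + 6 > 0`, the affine `L` is positive on `(0, m)`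
exactly when `L(m) = −(m³ − 3m² − 9m − 6) ≥ 0`. The cubic is negative at `0` and tends to `+∞`,
so by the intermediate value theorem it is non-positive at `m > 0` exactly when `m` lies below
its unique positive root. The boundary derivatives come from the simple zero of `φ` at `0` and
its double zero at `m`. -/

/-- The momentum profile of the complete extremal metric on `X ∖ S_∞`. -/
noncomputable def phiProfile (m τ : ℝ) : ℝ :=
  2 * τ * (m - τ) ^ 2 * (τ * (-m ^ 2 + 2 * m + 3) + m ^ 2 + 6 * m + 6) /
    (m ^ 2 * (m ^ 2 + 6 * m + 6) * (1 + τ))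

open Filter Set Topology

theorem nonpos_iff_le_of_unique_pos_root {f : ℝ → ℝ} (hf : Continuous f) (h0 : f 0 < 0)
    (htop : Tendsto f atTop atTop) {k : ℝ} (huniq : ∀ x, 0 < x → f x = 0 → x = k) {x : ℝ}
    (hx : 0 < x) : f x ≤ 0 ↔ x ≤ k := by
  constructor
  · intro hfx
    obtain ⟨b, hfb, hxb⟩ := ((htop.eventually_gt_atTop 0).and (eventually_ge_atTop x)).exists
    obtain ⟨y, ⟨hxy, -⟩, hfy⟩ := intermediate_value_Icc hxb hf.continuousOn ⟨hfx, hfb.le⟩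
    exact huniq y (hx.trans_le hxy) hfy ▸ hxy
  · intro hxk
    by_contra! hfx
    obtain ⟨y, ⟨hy0, hyx⟩, hfy⟩ := intermediate_value_Ioo hx.le hf.continuousOn ⟨h0, hfx⟩
    exact (huniq y hy0 hfy ▸ hyx).not_ge hxk

theorem Continuous.nonneg_of_pos_on_Ioo {g : ℝ → ℝ} (hg : Continuous g) {a b : ℝ} (hab : a < b)
    (hpos : ∀ x ∈ Ioo a b, 0 < g x) : 0 ≤ g b :=
  ge_of_tendsto (hg.tendsto b |>.mono_left nhdsWithin_le_nhds)
    (eventually_of_mem (Ioo_mem_nhdsLT hab) fun x hx => (hpos x hx).le)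

theorem hasDerivAt_sub_mul {g : ℝ → ℝ} {a : ℝ} (hg : DifferentiableAt ℝ g a) :
    HasDerivAt (fun x => (x - a) * g x) (g a) a :=
  (((hasDerivAt_id' a).sub_const a).mul hg.hasDerivAt).congr_deriv (by simp)

theorem hasDerivAt_sub_sq_mul {g : ℝ → ℝ} {a : ℝ} (hg : DifferentiableAt ℝ g a) :
    HasDerivAt (fun x => (x - a) ^ 2 * g x) 0 a :=
  ((((hasDerivAt_id' a).sub_const a).pow 2).mul hg.hasDerivAt).congr_deriv (by simp)

theorem cubic_tendsto_atTop :
    Tendsto (fun x : ℝ => x ^ 3 - 3 * x ^ 2 - 9 * x - 6) atTop atTop := by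
  refine tendsto_atTop_mono' atTop ?_ (tendsto_atTop_add_const_right atTop (-6) tendsto_id)
  filter_upwards [eventually_ge_atTop 6] with x hx
  rw [id]
  nlinarith [mul_nonneg (by linarith : (0 : ℝ) ≤ x - 6) (by linarith : (0 : ℝ) ≤ x)]

section

variable {m τ : ℝ}

def phiLinearFactor (m τ : ℝ) : ℝ := τ * (-m ^ 2 + 2 * m + 3) + m ^ 2 + 6 * m + 6

theorem continuous_phiLinearFactor : Continuous (phiLinearFactor m) := by
  unfold phiLinearFactor; fun_prop

theorem phiLinearFactor_self : phiLinearFactor m m = -(m ^ 3 - 3 * m ^ 2 - 9 * m - 6) := by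
  unfold phiLinearFactor; ring

theorem mul_phiLinearFactor (m τ : ℝ) :
    m * phiLinearFactor m τ = (m - τ) * phiLinearFactor m 0 + τ * phiLinearFactor m m := by
  unfold phiLinearFactor; ring

theorem phiLinearFactor_zero_pos (hm : 0 < m) : 0 < phiLinearFactor m 0 := by
  rw [phiLinearFactor, zero_mul, zero_add]
  positivity

theorem phiLinearFactor_nonneg (hm : 0 < m) (hLm : 0 ≤ phiLinearFactor m m) (hτ : τ ∈ Icc 0 m) :
    0 ≤ phiLinearFactor m τ := by
  refine nonneg_of_mul_nonneg_right ?_ hm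
  rw [mul_phiLinearFactor]
  exact add_nonneg (mul_nonneg (sub_nonneg.2 hτ.2) (phiLinearFactor_zero_pos hm).le)
    (mul_nonneg hτ.1 hLm)

theorem phiLinearFactor_pos (hm : 0 < m) (hLm : 0 ≤ phiLinearFactor m m) (hτ : τ ∈ Ioo 0 m) :
    0 < phiLinearFactor m τ := by
  refine pos_of_mul_pos_right ?_ hm.le
  rw [mul_phiLinearFactor]
  exact add_pos_of_pos_of_nonneg (mul_pos (sub_pos.2 hτ.2) (phiLinearFactor_zero_pos hm))
    (mul_nonneg hτ.1.le hLm)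

theorem phiProfile_denom_pos (hm : 0 < m) (hτ : 0 ≤ τ) :
    0 < m ^ 2 * (m ^ 2 + 6 * m + 6) * (1 + τ) := by
  positivity

theorem phiProfile_eq_mul (m τ : ℝ) :
    phiProfile m τ =
      2 * τ * (m - τ) ^ 2 / (m ^ 2 * (m ^ 2 + 6 * m + 6) * (1 + τ)) * phiLinearFactor m τ := by
  rw [phiProfile, phiLinearFactor, div_mul_eq_mul_div]

theorem phiProfile_pos_iff (hτ : τ ∈ Ioo 0 m) : 0 < phiProfile m τ ↔ 0 < phiLinearFactor m τ := by
  have hm : 0 < m := hτ.1.trans hτ.2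
  rw [phiProfile_eq_mul]
  refine mul_pos_iff_of_pos_left (div_pos ?_ (phiProfile_denom_pos hm hτ.1.le))
  exact mul_pos (mul_pos two_pos hτ.1) (pow_pos (sub_pos.2 hτ.2) 2)

theorem phiProfile_nonneg (hm : 0 < m) (hLm : 0 ≤ phiLinearFactor m m) (hτ : τ ∈ Icc 0 m) :
    0 ≤ phiProfile m τ := by
  have := hτ.1
  rw [phiProfile_eq_mul]
  exact mul_nonneg (div_nonneg (by positivity) (phiProfile_denom_pos hm hτ.1).le)
    (phiLinearFactor_nonneg hm hLm hτ)

theorem hasDerivAt_phiProfile_zero (hm : 0 < m) : HasDerivAt (phiProfile m) 2 0 := by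
  have hD := phiProfile_denom_pos hm le_rfl
  have hg : DifferentiableAt ℝ
      (fun τ => 2 * (m - τ) ^ 2 * phiLinearFactor m τ / (m ^ 2 * (m ^ 2 + 6 * m + 6) * (1 + τ)))
      0 := by
    unfold phiLinearFactor
    fun_prop (disch := exact hD.ne')
  convert hasDerivAt_sub_mul hg using 1
  · funext τ
    rw [phiProfile, phiLinearFactor]
    ring
  · rw [phiLinearFactor]
    field_simp
    ring

theorem hasDerivAt_phiProfile_self (hm : 0 < m) : HasDerivAt (phiProfile m) 0 m := by
  have hD := phiProfile_denom_pos hm hm.le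
  have hg : DifferentiableAt ℝ
      (fun τ => 2 * τ * phiLinearFactor m τ / (m ^ 2 * (m ^ 2 + 6 * m + 6) * (1 + τ))) m := by
    unfold phiLinearFactor
    fun_prop (disch := exact hD.ne')
  convert hasDerivAt_sub_sq_mul hg using 1
  funext τ
  rw [phiProfile, phiLinearFactor]
  ring

end

theorem stmt_16_general (m : ℝ) (hm : 0 < m) (k₂ : ℝ)
    (hk₂uniq : ∀ x : ℝ, 0 < x → x ^ 3 - 3 * x ^ 2 - 9 * x - 6 = 0 → x = k₂) :
    (((∀ τ ∈ Set.Icc (0 : ℝ) m, 0 ≤ phiProfile m τ) ∧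
        phiProfile m 0 = 0 ∧ phiProfile m m = 0 ∧
        ∀ τ ∈ Set.Ioo (0 : ℝ) m, 0 < phiProfile m τ) ↔ m ≤ k₂) ∧
    HasDerivAt (phiProfile m) 2 0 ∧ HasDerivAt (phiProfile m) 0 m := by
  refine ⟨?_, hasDerivAt_phiProfile_zero hm, hasDerivAt_phiProfile_self hm⟩
  rw [← nonpos_iff_le_of_unique_pos_root (by fun_prop) (by norm_num) cubic_tendsto_atTop
    hk₂uniq hm, ← neg_nonneg, ← phiLinearFactor_self]
  constructor
  · rintro ⟨-, -, -, hpos⟩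
    exact continuous_phiLinearFactor.nonneg_of_pos_on_Ioo hm fun τ hτ =>
      (phiProfile_pos_iff hτ).1 (hpos τ hτ)
  · intro hLm
    exact ⟨fun τ hτ => phiProfile_nonneg hm hLm hτ, by simp [phiProfile], by simp [phiProfile],
      fun τ hτ => (phiProfile_pos_iff hτ).2 (phiLinearFactor_pos hm hLm hτ)⟩

/-- the profile `φ` is non-negative on `[0,m]`, vanishes at the
endpoints, and is positive on `(0,m)`, if and only if `m ≤ k₂`, the unique
positive root of `m³ − 3m² − 9m − 6`; moreover `φ′(0) = 2` and `φ′(m) = 0`. -/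
theorem stmt_16 (m : ℝ) (hm : 0 < m) (k₂ : ℝ) (hk₂pos : 0 < k₂)
    (hk₂root : k₂ ^ 3 - 3 * k₂ ^ 2 - 9 * k₂ - 6 = 0)
    (hk₂uniq : ∀ x : ℝ, 0 < x → x ^ 3 - 3 * x ^ 2 - 9 * x - 6 = 0 → x = k₂) :
    (((∀ τ ∈ Set.Icc (0 : ℝ) m, 0 ≤ phiProfile m τ) ∧
        phiProfile m 0 = 0 ∧ phiProfile m m = 0 ∧
        ∀ τ ∈ Set.Ioo (0 : ℝ) m, 0 < phiProfile m τ) ↔ m ≤ k₂) ∧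
    HasDerivAt (phiProfile m) 2 0 ∧ HasDerivAt (phiProfile m) 0 m :=
  stmt_16_general m hm k₂ hk₂uniq
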